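/- Let g be a natural number. The map sending (A₁, B₁, …, A_g, B_g) to the simultaneous-conjugation orbit of the tuple (A₁, B₁, …, A_g, B_g, 𝐢, 𝐣, −𝐤) is a bijection from the set {(A₁, B₁, …, A_g, B_g) ∈ Sp(1)^{2g} : ∏ₖ [Aₖ, Bₖ] = 1} onto the set of simultaneous-conjugation orbits of tuples (A₁, B₁, …, A_g, B_g, C₁, C₂, C₃) in which each Aₖ, Bₖ is a unit quaternion, each Cᵢ is a purely imaginary unit quaternion, ∏ₖ [Aₖ, Bₖ] · C₁C₂C₃ = 1, and ∏ₖ [Aₖ, Bₖ] = 1. (This identifies the locus {∏[Aₖ,Bₖ] = I} in the traceless character variety 𝓜_{g,3} with the unquotiented representation space Hom(π₁(Σ_g), SU(2)), the key step in proving L_α ∩ L_β ≅ Hom(π₁(Y), SU(2)).) -/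

import Mathlib

/-!
Conjugation preserves `∏ₖ [Aₖ, Bₖ] = 1`, so only the last three entries need normalising.
Injectivity: a quaternion commuting with `𝐢` and `𝐣` is real, hence central, so the conjugation
relating two normalised tuples is trivial on them. Surjectivity: from `C₁C₂C₃ = 1` and `Cᵢ² = -1`
we get `C₁C₂ = -C₃`, so `C₁` and `C₂` are anticommuting square roots of `-1`. For square roots
`p`, `q` of `-1` the element `1 - qp` conjugates `p` to `q` (unless `q = -p`, when any element
anticommuting with `p` does), so one can first move `C₁` to `𝐢` and then, by an element commuting
with `𝐢`, move the image of `C₂` to `𝐣`; `C₃ = -C₁C₂` then goes to `-𝐢𝐣 = -𝐤`.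
-/

open Quaternion

noncomputable def qi : ℍ[ℝ] := ⟨0, 1, 0, 0⟩
noncomputable def qj : ℍ[ℝ] := ⟨0, 0, 1, 0⟩
noncomputable def qk : ℍ[ℝ] := ⟨0, 0, 0, 1⟩

lemma norm_qi : ‖qi‖ = 1 := by
  have h : ‖qi‖ * ‖qi‖ = 1 := by
    rw [← Quaternion.normSq_eq_norm_mul_self, Quaternion.normSq_def']; simp [qi]
  nlinarith [norm_nonneg qi]

lemma norm_qj : ‖qj‖ = 1 := by
  have h : ‖qj‖ * ‖qj‖ = 1 := by
    rw [← Quaternion.normSq_eq_norm_mul_self, Quaternion.normSq_def']; simp [qj]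
  nlinarith [norm_nonneg qj]

lemma norm_qk : ‖qk‖ = 1 := by
  have h : ‖qk‖ * ‖qk‖ = 1 := by
    rw [← Quaternion.normSq_eq_norm_mul_self, Quaternion.normSq_def']; simp [qk]
  nlinarith [norm_nonneg qk]

lemma re_qi : qi.re = 0 := rfl
lemma re_qj : qj.re = 0 := rfl
lemma re_qk : qk.re = 0 := rfl

lemma qi_mul_qj_mul_neg_qk : qi * qj * (-qk) = 1 := by
  ext <;> simp [Quaternion.re_mul, Quaternion.imI_mul, Quaternion.imJ_mul, Quaternion.imK_mul] <;> simp [qi, qj, qk]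

/-- Simultaneous conjugation by unit quaternions, as a relation on tuples of quaternions. -/
def uConj {ι : Type} (x y : ι → ℍ[ℝ]) : Prop :=
  ∃ D : ℍ[ℝ], ‖D‖ = 1 ∧ ∀ k, y k = D * x k * D⁻¹

theorem uConj_equivalence (ι : Type) : Equivalence (@uConj ι) := by
  constructor
  · intro x
    exact ⟨1, norm_one, fun k => by simp⟩
  · rintro x y ⟨D, hD, h⟩
    have hD0 : D ≠ 0 := by
      intro h0; rw [h0, norm_zero] at hD; norm_num at hD
    refine ⟨D⁻¹, by rw [norm_inv, hD]; norm_num, fun k => ?_⟩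
    rw [h k, inv_inv]
    simp [mul_assoc, inv_mul_cancel₀ hD0, inv_mul_cancel_left₀ hD0]
  · rintro x y z ⟨D, hD, h⟩ ⟨E, hE, h'⟩
    refine ⟨E * D, by rw [norm_mul, hD, hE]; norm_num, fun k => ?_⟩
    rw [h' k, h k, mul_inv_rev]
    simp [mul_assoc]

/-- The setoid of simultaneous conjugation on tuples of quaternions. -/
def conjSetoid (ι : Type) : Setoid (ι → ℍ[ℝ]) := ⟨uConj, uConj_equivalence ι⟩

/-- The setoid of simultaneous conjugation restricted to a conjugation-invariant subset. -/
def conjSetoidOn {ι : Type} (S : Set (ι → ℍ[ℝ])) : Setoid S :=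
  (conjSetoid ι).comap Subtype.val

/-- The (ordered) product of commutators `∏ₖ [Aₖ, Bₖ]`. -/
noncomputable def commProd {g : ℕ} (A B : Fin g → ℍ[ℝ]) : ℍ[ℝ] :=
  (List.ofFn fun k => A k * B k * (A k)⁻¹ * (B k)⁻¹).prod

/-- The set of tuples `(A₁, B₁, …, A_g, B_g, C₁, C₂, C₃)` of unit quaternions with each `Cᵢ`
purely imaginary, `∏ₖ [Aₖ, Bₖ] ⬝ C₁C₂C₃ = 1` and `∏ₖ [Aₖ, Bₖ] = 1`. -/
def S6 (g : ℕ) : Set ((Fin g ⊕ Fin g) ⊕ Fin 3 → ℍ[ℝ]) :=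
  {x | (∀ k : Fin g, ‖x (Sum.inl (Sum.inl k))‖ = 1) ∧
    (∀ k : Fin g, ‖x (Sum.inl (Sum.inr k))‖ = 1) ∧
    (∀ j : Fin 3, ‖x (Sum.inr j)‖ = 1 ∧ (x (Sum.inr j)).re = 0) ∧
    commProd (fun k => x (Sum.inl (Sum.inl k))) (fun k => x (Sum.inl (Sum.inr k))) *
      (x (Sum.inr 0) * x (Sum.inr 1) * x (Sum.inr 2)) = 1 ∧
    commProd (fun k => x (Sum.inl (Sum.inl k))) (fun k => x (Sum.inl (Sum.inr k))) = 1}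

/-- The domain: pairs of `g`-tuples of unit quaternions with trivial product of commutators,
i.e. `Hom(π₁(Σ_g), SU(2))`. -/
def SurfaceRep (g : ℕ) : Type :=
  {AB : (Fin g → ℍ[ℝ]) × (Fin g → ℍ[ℝ]) //
    (∀ k, ‖AB.1 k‖ = 1) ∧ (∀ k, ‖AB.2 k‖ = 1) ∧ commProd AB.1 AB.2 = 1}

lemma mem_S6 {g : ℕ} (AB : SurfaceRep g) :
    Sum.elim (Sum.elim AB.val.1 AB.val.2) ![qi, qj, -qk] ∈ S6 g := by
  obtain ⟨hA, hB, hc⟩ := AB.property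
  refine ⟨fun k => hA k, fun k => hB k, fun j => ?_, ?_, ?_⟩
  · fin_cases j <;> simp [norm_qi, norm_qj, norm_qk, re_qi, re_qj, re_qk]
  · show commProd AB.val.1 AB.val.2 * (qi * qj * -qk) = 1
    rw [hc, qi_mul_qj_mul_neg_qk, one_mul]
  · exact hc

namespace SemiconjBy

section GroupWithZero

variable {G₀ : Type*} [GroupWithZero G₀] {a x y z : G₀}

theorem iff_eq_mul_mul_inv₀ (ha : a ≠ 0) : SemiconjBy a x y ↔ y = a * x * a⁻¹ := by
  rw [eq_mul_inv_iff_mul_eq₀ ha, SemiconjBy, eq_comm]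

theorem conj_mk₀ (ha : a ≠ 0) (x : G₀) : SemiconjBy a x (a * x * a⁻¹) :=
  (iff_eq_mul_mul_inv₀ ha).2 rfl

theorem right_unique₀ (ha : a ≠ 0) (hy : SemiconjBy a x y) (hz : SemiconjBy a x z) : y = z :=
  mul_right_cancel₀ ha (hy.eq.symm.trans hz.eq)

end GroupWithZero

theorem list_prod_ofFn {M : Type*} [Monoid M] {a : M} :
    ∀ {n : ℕ} {f f' : Fin n → M}, (∀ k, SemiconjBy a (f k) (f' k)) →
      SemiconjBy a (List.ofFn f).prod (List.ofFn f').prod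
  | 0, _, _, _ => by simp
  | _ + 1, _, _, h => by
    simpa only [List.ofFn_succ, List.prod_cons] using
      (h 0).mul_right (list_prod_ofFn fun k => h k.succ)

theorem norm_eq {R : Type*} [NormedDivisionRing R] {a x y : R} (ha : a ≠ 0)
    (h : SemiconjBy a x y) : ‖x‖ = ‖y‖ := by
  have := congrArg norm h.eq
  rw [norm_mul, norm_mul, mul_comm] at this
  exact mul_right_cancel₀ (norm_ne_zero_iff.2 ha) this

end SemiconjBy

section SquareRootsOfMinusOne

variable {R : Type*} [Ring R] {p q c : R}

theorem semiconjBy_neg_of_mul_self_eq_neg_one (hp : p * p = -1) (hq : q * q = -1)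
    (hpq : p * q * (p * q) = -1) : SemiconjBy q p (-p) := by
  unfold SemiconjBy
  calc q * p = p * p * (q * p) * (q * q) := by rw [hp, hq]; noncomm_ring
    _ = p * (p * q * (p * q)) * q := by noncomm_ring
    _ = -p * q := by rw [hpq]; noncomm_ring

theorem semiconjBy_one_sub_mul (hp : p * p = -1) (hq : q * q = -1) :
    SemiconjBy (1 - q * p) p q := by
  unfold SemiconjBy
  calc (1 - q * p) * p = p - q * (p * p) := by noncomm_ring
    _ = q - q * q * p := by rw [hp, hq]; noncomm_ring
    _ = q * (1 - q * p) := by noncomm_ring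

theorem eq_neg_of_one_sub_mul_eq_zero (hp : p * p = -1) (h : 1 - q * p = 0) : q = -p := by
  calc q = -(q * (p * p)) := by rw [hp]; noncomm_ring
    _ = -((1 - (1 - q * p)) * p) := by noncomm_ring
    _ = -p := by rw [h, sub_zero, one_mul]

theorem mul_eq_neg_of_mul_mul_eq_one {a b : R} (hc : c * c = -1) (h : a * b * c = 1) :
    a * b = -c := by
  calc a * b = -(a * b * (c * c)) := by rw [hc]; noncomm_ring
    _ = -c := by rw [← mul_assoc, h, one_mul]

theorem commute_one_sub_mul (hcp : SemiconjBy c p (-p)) (hcq : SemiconjBy c q (-q)) :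
    Commute (1 - q * p) c := by
  have hqp : SemiconjBy c (q * p) (q * p) := by
    simpa only [mul_neg, neg_mul, neg_neg] using hcq.mul_right hcp
  exact ((Commute.one_right c).sub_right hqp).symm

theorem exists_semiconjBy_of_mul_self_eq_neg_one (hp : p * p = -1) (hq : q * q = -1)
    (hc : c ≠ 0) (hcp : SemiconjBy c p (-p)) : ∃ D ≠ 0, SemiconjBy D p q := by
  by_cases h : 1 - q * p = 0
  · exact ⟨c, hc, eq_neg_of_one_sub_mul_eq_zero hp h ▸ hcp⟩
  · exact ⟨1 - q * p, h, semiconjBy_one_sub_mul hp hq⟩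

theorem exists_semiconjBy_commute_of_mul_self_eq_neg_one (hp : p * p = -1) (hq : q * q = -1)
    (hc : c ≠ 0) (hcp : SemiconjBy c p (-p)) (hcq : SemiconjBy c q (-q)) :
    ∃ D ≠ 0, SemiconjBy D p q ∧ Commute D c := by
  by_cases h : 1 - q * p = 0
  · exact ⟨c, hc, eq_neg_of_one_sub_mul_eq_zero hp h ▸ hcp, Commute.refl c⟩
  · exact ⟨1 - q * p, h, semiconjBy_one_sub_mul hp hq, commute_one_sub_mul hcp hcq⟩

end SquareRootsOfMinusOne

section DivisionRing

variable {R : Type*} [DivisionRing R]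

theorem ne_zero_of_mul_self_eq_neg_one {p : R} (hp : p * p = -1) : p ≠ 0 := by
  rintro rfl
  simp at hp

theorem exists_semiconjBy_pair_of_mul_self_eq_neg_one {p₁ p₂ q₁ q₂ : R}
    (hp₁ : p₁ * p₁ = -1) (hp₂ : p₂ * p₂ = -1) (hq₁ : q₁ * q₁ = -1) (hq₂ : q₂ * q₂ = -1)
    (hp : SemiconjBy p₂ p₁ (-p₁)) (hq : SemiconjBy q₁ q₂ (-q₂)) :
    ∃ D ≠ 0, SemiconjBy D p₁ q₁ ∧ SemiconjBy D p₂ q₂ := by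
  obtain ⟨D, hD, hDp₁⟩ :=
    exists_semiconjBy_of_mul_self_eq_neg_one hp₁ hq₁ (ne_zero_of_mul_self_eq_neg_one hp₂) hp
  set r := D * p₂ * D⁻¹
  have hDp₂ : SemiconjBy D p₂ r := SemiconjBy.conj_mk₀ hD p₂
  have hr : r * r = -1 :=
    (hDp₂.mul_right hDp₂).right_unique₀ hD (hp₂ ▸ SemiconjBy.neg_one_right D)
  have hq₁r : SemiconjBy q₁ r (-r) := by
    have h₁ : SemiconjBy D (p₂ * p₁) (-(q₁ * r)) := by
      rw [hp.eq, neg_mul]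
      exact (hDp₁.mul_right hDp₂).neg_right
    rw [SemiconjBy, neg_mul, (hDp₂.mul_right hDp₁).right_unique₀ hD h₁, neg_neg]
  obtain ⟨E, hE, hEr, hEq₁⟩ :=
    exists_semiconjBy_commute_of_mul_self_eq_neg_one hr hq₂ (ne_zero_of_mul_self_eq_neg_one hq₁)
      hq₁r hq
  exact ⟨E * D, mul_ne_zero hE hD, SemiconjBy.mul_left hEq₁ hDp₁, hEr.mul_left hDp₂⟩

end DivisionRing

theorem ne_zero_of_norm_eq_one {E : Type*} [NormedAddGroup E] {a : E} (h : ‖a‖ = 1) : a ≠ 0 :=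
  norm_ne_zero_iff.1 (h ▸ one_ne_zero)

namespace Quaternion

theorem mul_self_eq_neg_one_of_norm_eq_one_of_re_eq_zero {p : ℍ[ℝ]} (hp : ‖p‖ = 1)
    (hre : p.re = 0) : p * p = -1 := by
  rw [← sq, sq_eq_neg_normSq.2 hre, normSq_eq_norm_mul_self, hp, mul_one, coe_one]

end Quaternion

open Quaternion

theorem qi_mul_qj : qi * qj = qk := by
  ext <;> simp [re_mul, imI_mul, imJ_mul, imK_mul] <;> simp [qi, qj, qk]

theorem semiconjBy_qi_qj_neg_qj : SemiconjBy qi qj (-qj) := by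
  ext <;> simp [re_mul, imI_mul, imJ_mul, imK_mul] <;> simp [qi, qj]

theorem commute_of_commute_qi_of_commute_qj {D : ℍ[ℝ]} (hi : Commute D qi) (hj : Commute D qj)
    (x : ℍ[ℝ]) : Commute D x := by
  have hi' := congrArg (fun q : ℍ[ℝ] => (q.imJ, q.imK)) hi.eq
  have hj' := congrArg QuaternionAlgebra.imK hj.eq
  simp only [imJ_mul, imK_mul, Prod.mk.injEq] at hi' hj'
  simp only [qi, qj, mul_zero, sub_self, add_zero, mul_one, zero_add, zero_mul, one_mul, zero_sub,
    sub_zero] at hi' hj'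
  have hD : D = (D.re : ℍ[ℝ]) := by
    ext <;> simp only [re_coe, imI_coe, imJ_coe, imK_coe] <;> linarith [hi'.1, hi'.2, hj']
  rw [hD]
  exact coe_commute _ _

theorem exists_norm_eq_one_semiconjBy_qi_qj {p q : ℍ[ℝ]} (hp : p * p = -1) (hq : q * q = -1)
    (hpq : p * q * (p * q) = -1) :
    ∃ D : ℍ[ℝ], ‖D‖ = 1 ∧ SemiconjBy D p qi ∧ SemiconjBy D q qj := by
  have hqi := mul_self_eq_neg_one_of_norm_eq_one_of_re_eq_zero norm_qi re_qi
  have hqj := mul_self_eq_neg_one_of_norm_eq_one_of_re_eq_zero norm_qj re_qj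
  obtain ⟨D, hD, hDp, hDq⟩ := exists_semiconjBy_pair_of_mul_self_eq_neg_one hp hq hqi hqj
    (semiconjBy_neg_of_mul_self_eq_neg_one hp hq hpq) semiconjBy_qi_qj_neg_qj
  have hnorm : ‖D‖ ≠ 0 := norm_ne_zero_iff.2 hD
  refine ⟨‖D‖⁻¹ • D, ?_, (SemiconjBy.smul_left_iff₀ (inv_ne_zero hnorm)).2 hDp,
    (SemiconjBy.smul_left_iff₀ (inv_ne_zero hnorm)).2 hDq⟩
  rw [norm_smul, norm_inv, norm_norm, inv_mul_cancel₀ hnorm]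

theorem exists_norm_eq_one_semiconjBy_qi_qj_neg_qk {C : Fin 3 → ℍ[ℝ]}
    (hC : ∀ j, ‖C j‖ = 1 ∧ (C j).re = 0) (hprod : C 0 * C 1 * C 2 = 1) :
    ∃ D : ℍ[ℝ], ‖D‖ = 1 ∧ ∀ j, SemiconjBy D (C j) (![qi, qj, -qk] j) := by
  have hsq j : C j * C j = -1 :=
    mul_self_eq_neg_one_of_norm_eq_one_of_re_eq_zero (hC j).1 (hC j).2
  have h01 : C 0 * C 1 = -C 2 := mul_eq_neg_of_mul_mul_eq_one (hsq 2) hprod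
  obtain ⟨D, hD, hD0, hD1⟩ := exists_norm_eq_one_semiconjBy_qi_qj (hsq 0) (hsq 1)
    (by rw [h01, neg_mul_neg, hsq 2])
  have hD2 : SemiconjBy D (C 2) (-qk) := by
    simpa only [h01, neg_neg, qi_mul_qj] using (hD0.mul_right hD1).neg_right
  refine ⟨D, hD, fun j => ?_⟩
  fin_cases j
  exacts [hD0, hD1, hD2]

theorem uConj_iff_exists_semiconjBy {ι : Type} {x y : ι → ℍ[ℝ]} :
    uConj x y ↔ ∃ D : ℍ[ℝ], ‖D‖ = 1 ∧ ∀ k, SemiconjBy D (x k) (y k) := by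
  refine exists_congr fun D => and_congr_right fun hD => forall_congr' fun k => ?_
  rw [SemiconjBy.iff_eq_mul_mul_inv₀ (ne_zero_of_norm_eq_one hD)]

theorem semiconjBy_commProd {g : ℕ} {D : ℍ[ℝ]} {A B A' B' : Fin g → ℍ[ℝ]}
    (hA : ∀ k, SemiconjBy D (A k) (A' k)) (hB : ∀ k, SemiconjBy D (B k) (B' k)) :
    SemiconjBy D (commProd A B) (commProd A' B') :=
  SemiconjBy.list_prod_ofFn fun k =>
    (((hA k).mul_right (hB k)).mul_right (hA k).inv_right₀).mul_right (hB k).inv_right₀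

/-- The map `(A₁, B₁, …, A_g, B_g) ↦ [(A₁, B₁, …, A_g, B_g, 𝐢, 𝐣, −𝐤)]` is a bijection from
`{∏ₖ [Aₖ, Bₖ] = 1} ⊆ Sp(1)^{2g}` onto the quotient of `S6 g` by simultaneous conjugation:
the locus `{∏ₖ [Aₖ, Bₖ] = I}` in `𝓜_{g,3}` is `Hom(π₁(Σ_g), SU(2))`. -/
theorem surface_locus_is_unquotiented_rep_space (g : ℕ) :
    Function.Bijective (fun AB : SurfaceRep g =>
      Quotient.mk (conjSetoidOn (S6 g))
        ⟨Sum.elim (Sum.elim AB.val.1 AB.val.2) ![qi, qj, -qk], mem_S6 AB⟩) := by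
  constructor
  · intro AB AB' h
    obtain ⟨D, hD, hDx⟩ := uConj_iff_exists_semiconjBy.1 (Quotient.exact h)
    have hD₀ : D ≠ 0 := ne_zero_of_norm_eq_one hD
    have hcentral := commute_of_commute_qi_of_commute_qj (hDx (.inr 0)) (hDx (.inr 1))
    have hfixed k := (hcentral _).right_unique₀ hD₀ (hDx k)
    exact Subtype.ext (Prod.ext (funext fun k => hfixed (.inl (.inl k)))
      (funext fun k => hfixed (.inl (.inr k))))
  · refine Quotient.ind fun ⟨x, hA, hB, hC, hrel, hcomm⟩ => ?_
    obtain ⟨D, hD, hDC⟩ := exists_norm_eq_one_semiconjBy_qi_qj_neg_qk hC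
      (by rwa [hcomm, one_mul] at hrel)
    have hD₀ : D ≠ 0 := ne_zero_of_norm_eq_one hD
    have hDx k : SemiconjBy D (x k) (D * x k * D⁻¹) := SemiconjBy.conj_mk₀ hD₀ _
    refine ⟨⟨(fun k => D * x (.inl (.inl k)) * D⁻¹, fun k => D * x (.inl (.inr k)) * D⁻¹),
      fun k => (hDx _).norm_eq hD₀ ▸ hA k, fun k => (hDx _).norm_eq hD₀ ▸ hB k, ?_⟩, ?_⟩
    · refine (semiconjBy_commProd (fun k => hDx _) (fun k => hDx _)).right_unique₀ hD₀ ?_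
      rw [hcomm]
      exact SemiconjBy.one_right D
    · refine Quotient.sound
        ((uConj_equivalence _).symm (uConj_iff_exists_semiconjBy.2 ⟨D, hD, ?_⟩))
      rintro ((k | k) | j)
      exacts [hDx _, hDx _, hDC j]
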